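/- Let ε > 0 and let g₀ ≤ h₀ (pointwise) be left-continuous non-increasing functions from (0,∞) into [0,ω₁) with finite ranges that vanish beyond some A < ∞. Let (g_i)_{i=0}^{n}, (γ_i)_{i=0}^{n−1} and (h_i)_{i=0}^{m}, (η_i)_{i=0}^{m−1} be the sequences produced by applying the greedy ε-compression procedure to g₀ and to h₀, respectively. Then Σ_{i=0}^{n−1} γ_i + g_n(t) ≤ Σ_{i=0}^{m−1} η_i + h_m(t) (ordinal sums, summed in order of increasing index) for all t with 0 < t ≤ ε; and if moreover λ({t : g₀(t)+1 ≤ h₀(t)}) ≥ ε, then Σ_{i=0}^{n−1} γ_i + g_n(ε) + 1 ≤ Σ_{i=0}^{m−1} η_i + h_m(ε). -/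

import Mathlib

open MeasureTheory Set Ordinal Filter
open scoped Classical

/-- `g` is non-increasing on `(0,∞)`. -/
def NonIncr (g : ℝ → Ordinal) : Prop := ∀ s t : ℝ, 0 < s → s ≤ t → g t ≤ g s

/-- `g` is left continuous on `(0,∞)`; for non-increasing ordinal-valued
functions this is equivalent to being locally constant from the left. -/
def LeftCont (g : ℝ → Ordinal) : Prop :=
  ∀ t : ℝ, 0 < t → ∃ δ > 0, ∀ s : ℝ, t - δ < s → s ≤ t → g s = g t

/-- `g` has finite range on `(0,∞)`. -/
def FiniteRange (g : ℝ → Ordinal) : Prop := (g '' Set.Ioi (0:ℝ)).Finite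

/-- `g` takes values in `[0,ω₁)`, the countable ordinals. -/
def CountableValued (g : ℝ → Ordinal) : Prop := ∀ t : ℝ, 0 < t → g t < ω₁

/-- `g` vanishes beyond `A`. -/
def VanishesBeyond (g : ℝ → Ordinal) (A : ℝ) : Prop := ∀ t : ℝ, A < t → g t = 0

/-- The level set `{t ∈ (0,∞) : g t = α}`. -/
def lev (g : ℝ → Ordinal) (α : Ordinal) : Set ℝ := {t | 0 < t ∧ g t = α}

/-- `G` is the non-increasing left-continuous rearrangement of `u`: it is
non-increasing, left continuous, and each nonzero level set has the same
Lebesgue measure as that of `u`. -/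
def IsRearrangement (G u : ℝ → Ordinal) : Prop :=
  NonIncr G ∧ LeftCont G ∧ ∀ α : Ordinal, 0 < α → volume (lev G α) = volume (lev u α)

/-- The function `g − γ·1_I` (pointwise ordinal subtraction on `I`). -/
noncomputable def subInd (g : ℝ → Ordinal) (γ : Ordinal) (I : Set ℝ) : ℝ → Ordinal :=
  fun t => if t ∈ I then g t - γ else g t

/-- The ordered ordinal sum `γ₀ + γ₁ + ⋯ + γ_{n-1}` (in order of increasing index). -/
def osum (γ : ℕ → Ordinal) : ℕ → Ordinal
  | 0 => 0
  | n + 1 => osum γ n + γ n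

/-- One step of the greedy `ε`-compression procedure: `γᵢ` is the largest ordinal of the form
`ω ^ β` with `ω ^ β ≤ gᵢ(ε)`, and `g_{i+1}` is the non-increasing left-continuous rearrangement
of `gᵢ − γᵢ·1_{(0,ε]}`; the procedure stops at the first index where the value at `ε` is `0`. -/
def GreedyProcedure (ε : ℝ) (g : ℕ → ℝ → Ordinal) (γ : ℕ → Ordinal) (n : ℕ) : Prop :=
  (∀ i < n, g i ε ≠ 0) ∧ g n ε = 0 ∧
  (∀ i < n, (∃ β : Ordinal, γ i = (ω : Ordinal) ^ β) ∧ γ i ≤ g i ε ∧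
      (∀ β : Ordinal, (ω : Ordinal) ^ β ≤ g i ε → (ω : Ordinal) ^ β ≤ γ i)) ∧
  (∀ i < n, IsRearrangement (g (i + 1)) (subInd (g i) (γ i) (Set.Ioc 0 ε)))

/-!
A non-increasing left-continuous `f` with finite range is determined by its distribution
`α ↦ |{f ≥ α}|`, because `{f ≥ α} = (0, |{f ≥ α}|]`. A compression step by `γ` turns the
distribution `d` into `α ↦ min (d (γ + α)) ε + (d α - ε)`, which is monotone in `d`. Hence
compressing `g ≤ h` by the same `γ` keeps `g ≤ h`, and it does not shrink `|{g < h}|`: on `(0, ε]`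
both functions lose the same `γ`, and a sorted pair has the least possible agreement set for its
distributions. The greedy steps of `g` and `h` therefore coincide until `g(ε)` falls below the
current step `ω ^ e` of `h`. From then on the remaining steps of `g` sum to less than `ω ^ e`,
which absorbs them, while `g` only decreases and `h(t) ≥ ω ^ e` on `(0, ε]`.
-/

open scoped ENNReal

theorem add_le_of_lt_omega0_opow {a x y e : Ordinal} (ha : a < ω ^ e) (hy : ω ^ e ≤ y)
    (hx : x ≤ y) : a + x ≤ y := by
  rcases lt_or_ge x (ω ^ e) with hxe | hxe
  · exact (isPrincipal_add_omega0_opow e ha hxe).le.trans hy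
  · rwa [add_of_omega0_opow_le ha hxe]

theorem Ordinal.sub_le_sub_right {a b : Ordinal} (h : a ≤ b) (c : Ordinal) : a - c ≤ b - c :=
  Ordinal.sub_le.2 (h.trans (Ordinal.le_add_sub b c))

theorem Ordinal.sub_lt_sub_iff_right {a b c : Ordinal} (ha : c ≤ a) : a - c < b - c ↔ a < b := by
  rw [Ordinal.lt_sub, Ordinal.add_sub_cancel_of_le ha]

theorem osum_succ' (γ : ℕ → Ordinal) (n : ℕ) :
    osum γ (n + 1) = γ 0 + osum (fun i => γ (i + 1)) n := by
  induction n with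
  | zero => simp [osum]
  | succ n ih => rw [osum, ih, add_assoc, osum]

theorem ENNReal.min_add_tsub_le {a b c : ℝ≥0∞} (h : a ≤ b) : min a c + (b - c) ≤ b := by
  rcases le_total c b with hcb | hbc
  · calc min a c + (b - c) ≤ c + (b - c) := add_le_add_left (min_le_right a c) _
      _ = b := add_tsub_cancel_of_le hcb
  · rw [tsub_eq_zero_of_le hbc, add_zero]
    exact (min_le_left a c).trans h

def superlevel (f : ℝ → Ordinal) (α : Ordinal) : Set ℝ := {t | 0 < t ∧ α ≤ f t}

theorem superlevel_mono {f F : ℝ → Ordinal} (h : ∀ t, 0 < t → f t ≤ F t) (α : Ordinal) :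
    superlevel f α ⊆ superlevel F α :=
  fun t ht => ⟨ht.1, ht.2.trans (h t ht.1)⟩

theorem superlevel_anti (f : ℝ → Ordinal) {α β : Ordinal} (h : α ≤ β) :
    superlevel f β ⊆ superlevel f α :=
  fun _ ht => ⟨ht.1, h.trans ht.2⟩

theorem lev_eq_superlevel_diff (f : ℝ → Ordinal) (β : Ordinal) :
    lev f β = superlevel f β \ superlevel f (β + 1) := by
  ext t
  simp only [lev, superlevel, Set.mem_sdiff, mem_ofPred_eq, not_and, not_le, Order.lt_add_one_iff]
  constructor
  · rintro ⟨ht, rfl⟩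
    exact ⟨⟨ht, le_rfl⟩, fun _ => le_rfl⟩
  · rintro ⟨⟨ht, h1⟩, h2⟩
    exact ⟨ht, (h2 ht).antisymm h1⟩

namespace NonIncr

variable {f : ℝ → Ordinal}

theorem mem_superlevel_of_le (hf : NonIncr f) {α : Ordinal} {s t : ℝ} (hs : 0 < s) (hst : s ≤ t)
    (ht : t ∈ superlevel f α) : s ∈ superlevel f α :=
  ⟨hs, ht.2.trans (hf s t hs hst)⟩

theorem measurableSet_superlevel (hf : NonIncr f) (α : Ordinal) :
    MeasurableSet (superlevel f α) :=
  Set.OrdConnected.measurableSet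
    ⟨fun _ hs _ hy _ ht => hf.mem_superlevel_of_le (hs.1.trans_le ht.1) ht.2 hy⟩

theorem measurableSet_lev (hf : NonIncr f) (β : Ordinal) : MeasurableSet (lev f β) := by
  rw [lev_eq_superlevel_diff]
  exact (hf.measurableSet_superlevel β).diff (hf.measurableSet_superlevel (β + 1))

end NonIncr

theorem LeftCont.volume_lev_pos {f : ℝ → Ordinal} (hf : LeftCont f) {β : Ordinal}
    (hne : (lev f β).Nonempty) : 0 < volume (lev f β) := by
  obtain ⟨t, ht, rfl⟩ := hne
  obtain ⟨δ, hδ, hconst⟩ := hf t ht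
  have hsub : Ioc (max (t - δ) 0) t ⊆ lev f (f t) := fun s hs =>
    ⟨(le_max_right _ _).trans_lt hs.1, hconst s ((le_max_left _ _).trans_lt hs.1) hs.2⟩
  refine lt_of_lt_of_le ?_ (measure_mono hsub)
  rw [Real.volume_Ioc, ENNReal.ofReal_pos, sub_pos]
  exact max_lt (by linarith) ht

structure Admissible (f : ℝ → Ordinal) : Prop where
  nonIncr : NonIncr f
  leftCont : LeftCont f
  finiteRange : FiniteRange f
  volume_superlevel_ne_top : ∀ α, 0 < α → volume (superlevel f α) ≠ ∞

theorem VanishesBeyond.volume_superlevel_ne_top {f : ℝ → Ordinal} {A : ℝ}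
    (hf : VanishesBeyond f A) {α : Ordinal} (hα : 0 < α) : volume (superlevel f α) ≠ ∞ := by
  have hsub : superlevel f α ⊆ Ioc 0 A := fun t ht =>
    ⟨ht.1, not_lt.1 fun hAt => hα.not_ge (hf t hAt ▸ ht.2)⟩
  exact ne_top_of_le_ne_top (by simp [Real.volume_Ioc]) (measure_mono hsub)

namespace Admissible

variable {f F : ℝ → Ordinal} {α : Ordinal}

theorem bddAbove_superlevel (hf : Admissible f) (hα : 0 < α) : BddAbove (superlevel f α) := by
  by_contra hb
  have hsub : Ioi (0 : ℝ) ⊆ superlevel f α := fun s hs => by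
    obtain ⟨t, ht, hst⟩ := not_bddAbove_iff.1 hb s
    exact hf.nonIncr.mem_superlevel_of_le hs hst.le ht
  exact hf.volume_superlevel_ne_top α hα (top_unique (Real.volume_Ioi ▸ measure_mono hsub))

theorem superlevel_eq_Ioc (hf : Admissible f) (hα : 0 < α) :
    superlevel f α = Ioc 0 (volume (superlevel f α)).toReal := by
  rcases (superlevel f α).eq_empty_or_nonempty with he | ⟨t₀, ht₀⟩
  · simp [he]
  set b := sSup (superlevel f α)
  have hbdd := hf.bddAbove_superlevel hα
  have hb : b ∈ superlevel f α := by
    have hb_pos : 0 < b := ht₀.1.trans_le (le_csSup hbdd ht₀)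
    obtain ⟨δ, hδ, hconst⟩ := hf.leftCont b hb_pos
    obtain ⟨s, hs, hbs⟩ := exists_lt_of_lt_csSup ⟨t₀, ht₀⟩ (sub_lt_self b hδ)
    exact ⟨hb_pos, hconst s hbs (le_csSup hbdd hs) ▸ hs.2⟩
  have hIoc : superlevel f α = Ioc 0 b :=
    Subset.antisymm (fun t ht => ⟨ht.1, le_csSup hbdd ht⟩)
      (fun t ht => hf.nonIncr.mem_superlevel_of_le ht.1 ht.2 hb)
  rw [hIoc, Real.volume_Ioc, _root_.sub_zero, ENNReal.toReal_ofReal hb.1.le]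

theorem le_iff (hf : Admissible f) (hα : 0 < α) {t : ℝ} (ht : 0 < t) :
    α ≤ f t ↔ ENNReal.ofReal t ≤ volume (superlevel f α) := by
  rw [ENNReal.ofReal_le_iff_le_toReal (hf.volume_superlevel_ne_top α hα)]
  have hmem : t ∈ superlevel f α ↔ t ∈ Ioc 0 (volume (superlevel f α)).toReal := by
    rw [← hf.superlevel_eq_Ioc hα]
  simpa [superlevel, ht] using hmem

theorem le_of_volume_superlevel_le (hf : Admissible f) (hF : Admissible F)
    (h : ∀ α, 0 < α → volume (superlevel f α) ≤ volume (superlevel F α)) {t : ℝ} (ht : 0 < t) :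
    f t ≤ F t := by
  rcases eq_zero_or_pos (f t) with h0 | hpos
  · exact h0 ▸ zero_le
  · exact (hF.le_iff hpos ht).2 (((hf.le_iff hpos ht).1 le_rfl).trans (h _ hpos))

theorem volume_superlevel_diff (hf : Admissible f) (hF : Admissible F) {β : Ordinal}
    (hα : 0 < α) (hβ : 0 < β) :
    volume (superlevel f α \ superlevel F β) =
      volume (superlevel f α) - volume (superlevel F β) := by
  have hsub {S T : Set ℝ} (hS : S = Ioc 0 (volume S).toReal) (hT : T = Ioc 0 (volume T).toReal)
      (hT_fin : volume T ≠ ∞) (h : volume S ≤ volume T) : S ⊆ T := by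
    rw [hS, hT]
    exact Ioc_subset_Ioc_right (ENNReal.toReal_mono hT_fin h)
  have hSf := hf.superlevel_eq_Ioc hα
  have hSF := hF.superlevel_eq_Ioc hβ
  rcases le_total (volume (superlevel F β)) (volume (superlevel f α)) with hle | hle
  · exact measure_sdiff (hsub hSF hSf (hf.volume_superlevel_ne_top α hα) hle)
      (hF.nonIncr.measurableSet_superlevel β).nullMeasurableSet (hF.volume_superlevel_ne_top β hβ)
  · rw [tsub_eq_zero_of_le hle,
      sdiff_eq_empty.2 (hsub hSf hSF (hF.volume_superlevel_ne_top β hβ) hle), measure_empty]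

end Admissible

theorem volume_superlevel_eq_sum {f : ℝ → Ordinal} {s : Finset Ordinal}
    (hs : ∀ t, 0 < t → f t ≠ 0 → f t ∈ s) (hm : ∀ β, MeasurableSet (lev f β)) {α : Ordinal}
    (hα : 0 < α) :
    volume (superlevel f α) = ∑ β ∈ s with α ≤ β, volume (lev f β) := by
  have hU : superlevel f α = ⋃ β ∈ s.filter (α ≤ ·), lev f β := by
    ext t
    simp only [superlevel, lev, mem_iUnion, Finset.mem_filter, mem_ofPred_eq, exists_prop]
    constructor
    · rintro ⟨ht, hle⟩
      exact ⟨f t, ⟨hs t ht (hα.trans_le hle).ne', hle⟩, ht, rfl⟩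
    · rintro ⟨β, ⟨-, hle⟩, ht, rfl⟩
      exact ⟨ht, hle⟩
  rw [hU]
  exact measure_biUnion_finset
    (fun β _ β' _ hne => disjoint_left.2 fun _ h h' => hne (h.2.symm.trans h'.2))
    (fun β _ => hm β)

namespace IsRearrangement

variable {G u : ℝ → Ordinal}

theorem mem_image (hG : IsRearrangement G u) {t : ℝ} (ht : 0 < t) (h0 : G t ≠ 0) :
    G t ∈ u '' Ioi 0 := by
  have hpos := hG.2.1.volume_lev_pos ⟨t, ht, rfl⟩
  rw [hG.2.2 _ (pos_iff_ne_zero.2 h0)] at hpos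
  obtain ⟨s, hs, hus⟩ := nonempty_of_measure_ne_zero hpos.ne'
  exact ⟨s, hs, hus⟩

theorem finiteRange (hG : IsRearrangement G u) (hu : FiniteRange u) : FiniteRange G := by
  refine (hu.union (finite_singleton 0)).subset ?_
  rintro _ ⟨t, ht, rfl⟩
  by_cases h0 : G t = 0
  · exact Or.inr h0
  · exact Or.inl (hG.mem_image ht h0)

theorem volume_superlevel (hG : IsRearrangement G u) (hu : FiniteRange u)
    (hm : ∀ β, MeasurableSet (lev u β)) {α : Ordinal} (hα : 0 < α) :
    volume (superlevel G α) = volume (superlevel u α) := by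
  have hsG : ∀ t, 0 < t → G t ≠ 0 → G t ∈ hu.toFinset := fun t ht h0 =>
    hu.mem_toFinset.2 (hG.mem_image ht h0)
  have hsu : ∀ t, 0 < t → u t ≠ 0 → u t ∈ hu.toFinset := fun t ht _ =>
    hu.mem_toFinset.2 ⟨t, ht, rfl⟩
  rw [volume_superlevel_eq_sum hsG hG.1.measurableSet_lev hα, volume_superlevel_eq_sum hsu hm hα]
  exact Finset.sum_congr rfl fun β hβ => hG.2.2 β (hα.trans_le (Finset.mem_filter.1 hβ).2)

end IsRearrangement

theorem FiniteRange.subInd {g : ℝ → Ordinal} (hg : FiniteRange g) (γ : Ordinal) (I : Set ℝ) :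
    FiniteRange (subInd g γ I) := by
  refine (hg.union (hg.image (· - γ))).subset ?_
  rintro _ ⟨t, ht, rfl⟩
  by_cases htI : t ∈ I
  · exact Or.inr ⟨g t, ⟨t, ht, rfl⟩, (if_pos htI).symm⟩
  · exact Or.inl ⟨t, ht, (if_neg htI).symm⟩

theorem volume_Ioc_inter_union_Ioi_inter {ε a b : ℝ} (hε : 0 ≤ ε) :
    volume (Ioc 0 ε ∩ Ioc 0 a ∪ Ioi ε ∩ Ioc 0 b) =
      min (ENNReal.ofReal a) (ENNReal.ofReal ε) + (ENNReal.ofReal b - ENNReal.ofReal ε) := by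
  have hIoi : Ioi ε ∩ Ioc 0 b = Ioc ε b := by
    rw [inter_comm, Ioc_inter_Ioi, max_eq_right hε]
  rw [Ioc_inter_Ioc, max_self, hIoi, measure_union _ measurableSet_Ioc]
  · rw [Real.volume_Ioc, Real.volume_Ioc, _root_.sub_zero, ENNReal.ofReal_min, min_comm,
      ENNReal.ofReal_sub _ hε]
  · exact disjoint_left.2 fun t ht ht' => (ht.2.trans (min_le_left _ _)).not_gt ht'.1

section Compression

variable {ε : ℝ} {g G : ℝ → Ordinal} {γ : Ordinal}

theorem superlevel_subInd (hg : NonIncr g) (hγ : γ ≤ g ε) (α : Ordinal) :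
    superlevel (subInd g γ (Ioc 0 ε)) α =
      Ioc 0 ε ∩ superlevel g (γ + α) ∪ Ioi ε ∩ superlevel g α := by
  ext t
  by_cases htε : t ∈ Ioc 0 ε
  · have hγt : γ ≤ g t := hγ.trans (hg t ε htε.1 htε.2)
    simp only [superlevel, subInd, htε, if_true, Ordinal.le_sub_of_le hγt, mem_ofPred_eq,
      mem_union, mem_inter_iff, mem_Ioi, true_and, not_lt.2 htε.2, false_and, or_false]
  · simp only [superlevel, subInd, htε, if_false, mem_ofPred_eq, mem_union, mem_inter_iff,
      mem_Ioi, false_and, false_or]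
    simp only [mem_Ioc, not_and, not_le] at htε
    exact ⟨fun h => ⟨htε h.1, h⟩, And.right⟩

theorem measurableSet_lev_subInd (hg : NonIncr g) (hγ : γ ≤ g ε) (β : Ordinal) :
    MeasurableSet (lev (subInd g γ (Ioc 0 ε)) β) := by
  have hm (α : Ordinal) : MeasurableSet (superlevel (subInd g γ (Ioc 0 ε)) α) := by
    rw [superlevel_subInd hg hγ]
    exact (measurableSet_Ioc.inter (hg.measurableSet_superlevel _)).union
      (measurableSet_Ioi.inter (hg.measurableSet_superlevel _))
  rw [lev_eq_superlevel_diff]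
  exact (hm β).diff (hm (β + 1))

theorem volume_superlevel_subInd (hε : 0 ≤ ε) (hg : Admissible g) (hγ : γ ≤ g ε) {α : Ordinal}
    (hα : 0 < α) :
    volume (superlevel (subInd g γ (Ioc 0 ε)) α) =
      min (volume (superlevel g (γ + α))) (ENNReal.ofReal ε) +
        (volume (superlevel g α) - ENNReal.ofReal ε) := by
  have hγα : 0 < γ + α := hα.trans_le le_add_self
  rw [superlevel_subInd hg.nonIncr hγ]
  conv_lhs => rw [hg.superlevel_eq_Ioc hγα, hg.superlevel_eq_Ioc hα]
  rw [volume_Ioc_inter_union_Ioi_inter hε,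
    ENNReal.ofReal_toReal (hg.volume_superlevel_ne_top _ hγα),
    ENNReal.ofReal_toReal (hg.volume_superlevel_ne_top _ hα)]

namespace IsRearrangement

theorem volume_superlevel_compress (hε : 0 ≤ ε) (hg : Admissible g) (hγ : γ ≤ g ε)
    (hG : IsRearrangement G (subInd g γ (Ioc 0 ε))) {α : Ordinal} (hα : 0 < α) :
    volume (superlevel G α) =
      min (volume (superlevel g (γ + α))) (ENNReal.ofReal ε) +
        (volume (superlevel g α) - ENNReal.ofReal ε) := by
  rw [hG.volume_superlevel (hg.finiteRange.subInd γ _) (measurableSet_lev_subInd hg.nonIncr hγ) hα,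
    volume_superlevel_subInd hε hg hγ hα]

theorem admissible_compress (hε : 0 ≤ ε) (hg : Admissible g) (hγ : γ ≤ g ε)
    (hG : IsRearrangement G (subInd g γ (Ioc 0 ε))) : Admissible G where
  nonIncr := hG.1
  leftCont := hG.2.1
  finiteRange := hG.finiteRange (hg.finiteRange.subInd γ _)
  volume_superlevel_ne_top α hα := by
    rw [hG.volume_superlevel_compress hε hg hγ hα]
    exact ENNReal.add_ne_top.2 ⟨ne_top_of_le_ne_top ENNReal.ofReal_ne_top (min_le_right _ _),
      ne_top_of_le_ne_top (hg.volume_superlevel_ne_top α hα) tsub_le_self⟩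

theorem compress_le (hε : 0 ≤ ε) (hg : Admissible g) (hγ : γ ≤ g ε)
    (hG : IsRearrangement G (subInd g γ (Ioc 0 ε))) {t : ℝ} (ht : 0 < t) : G t ≤ g t := by
  refine (hG.admissible_compress hε hg hγ).le_of_volume_superlevel_le hg (fun α hα => ?_) ht
  rw [hG.volume_superlevel_compress hε hg hγ hα]
  exact ENNReal.min_add_tsub_le (measure_mono (superlevel_anti g le_add_self))

theorem le_add_compress (hε : 0 ≤ ε) (hg : Admissible g) (hγ : γ ≤ g ε)
    (hG : IsRearrangement G (subInd g γ (Ioc 0 ε))) {t : ℝ} (ht : 0 < t) (htε : t ≤ ε) :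
    g t ≤ γ + G t := by
  rw [← Ordinal.sub_le]
  rcases eq_zero_or_pos (g t - γ) with h0 | hpos
  · exact h0 ▸ zero_le
  have hgt : γ + (g t - γ) = g t :=
    Ordinal.add_sub_cancel_of_le (hγ.trans (hg.nonIncr t ε ht htε))
  refine ((hG.admissible_compress hε hg hγ).le_iff hpos ht).2 ?_
  rw [hG.volume_superlevel_compress hε hg hγ hpos, hgt]
  refine le_trans (le_min ?_ (ENNReal.ofReal_le_ofReal htε)) le_self_add
  exact (hg.le_iff (hgt ▸ hpos.trans_le le_add_self) ht).1 le_rfl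

theorem compress_mono {f F H : ℝ → Ordinal} (hε : 0 ≤ ε) (hf : Admissible f) (hF : Admissible F)
    (hle : ∀ t, 0 < t → f t ≤ F t) (hγf : γ ≤ f ε) (hγF : γ ≤ F ε)
    (hG : IsRearrangement G (subInd f γ (Ioc 0 ε)))
    (hH : IsRearrangement H (subInd F γ (Ioc 0 ε))) {t : ℝ} (ht : 0 < t) : G t ≤ H t := by
  refine (hG.admissible_compress hε hf hγf).le_of_volume_superlevel_le
    (hH.admissible_compress hε hF hγF) (fun α hα => ?_) ht
  rw [hG.volume_superlevel_compress hε hf hγf hα, hH.volume_superlevel_compress hε hF hγF hα]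
  gcongr <;> exact superlevel_mono hle _

end IsRearrangement

end Compression

def strictSet (f F : ℝ → Ordinal) : Set ℝ := {t | 0 < t ∧ f t < F t}

def eqSet (f F : ℝ → Ordinal) : Set ℝ := {t | 0 < t ∧ f t = F t ∧ F t ≠ 0}

section StrictSet

variable {f F : ℝ → Ordinal}

theorem strictSet_eq_diff (hle : ∀ t, 0 < t → f t ≤ F t) :
    strictSet f F = superlevel F 1 \ eqSet f F := by
  ext t
  simp only [strictSet, eqSet, superlevel, mem_ofPred_eq, Set.mem_sdiff, Order.one_le_iff_ne_zero]
  constructor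
  · rintro ⟨ht, hlt⟩
    exact ⟨⟨ht, (zero_le.trans_lt hlt).ne'⟩, fun h => hlt.ne h.2.1⟩
  · rintro ⟨⟨ht, h0⟩, hne⟩
    exact ⟨ht, (hle t ht).lt_of_ne fun h => hne ⟨ht, h, h0⟩⟩

theorem eqSet_eq_biUnion {s : Finset Ordinal} (hs : ∀ t, 0 < t → F t ≠ 0 → F t ∈ s)
    (h0 : 0 ∉ s) : eqSet f F = ⋃ β ∈ s, lev f β ∩ lev F β := by
  ext t
  simp only [eqSet, lev, mem_iUnion, mem_inter_iff, mem_ofPred_eq, exists_prop]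
  constructor
  · rintro ⟨ht, heq, hne⟩
    exact ⟨F t, hs t ht hne, ⟨ht, heq⟩, ht, rfl⟩
  · rintro ⟨β, hβ, ⟨ht, rfl⟩, -, hF⟩
    exact ⟨ht, hF.symm, hF ▸ fun h => h0 (h ▸ hβ)⟩

theorem lev_inter_lev_eq (hle : ∀ t, 0 < t → f t ≤ F t) (β : Ordinal) :
    lev f β ∩ lev F β = superlevel f β \ superlevel F (β + 1) := by
  ext t
  simp only [lev, superlevel, mem_inter_iff, Set.mem_sdiff, mem_ofPred_eq, not_and, not_le,
    Order.lt_add_one_iff]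
  constructor
  · rintro ⟨⟨ht, rfl⟩, -, hF⟩
    exact ⟨⟨ht, le_rfl⟩, fun _ => hF.le⟩
  · rintro ⟨⟨ht, hβ⟩, hF⟩
    have hfβ : f t = β := ((hle t ht).trans (hF ht)).antisymm hβ
    exact ⟨⟨ht, hfβ⟩, ht, (hF ht).antisymm (hfβ ▸ hle t ht)⟩

theorem volume_strictSet {s : Finset Ordinal} (hle : ∀ t, 0 < t → f t ≤ F t)
    (hs : ∀ t, 0 < t → F t ≠ 0 → F t ∈ s) (h0 : 0 ∉ s) (hmf : ∀ β, MeasurableSet (lev f β))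
    (hmF : ∀ β, MeasurableSet (lev F β)) (hfin : volume (superlevel F 1) ≠ ∞) :
    volume (strictSet f F) =
      volume (superlevel F 1) - ∑ β ∈ s, volume (superlevel f β \ superlevel F (β + 1)) := by
  have hsub : eqSet f F ⊆ superlevel F 1 := fun t ht =>
    ⟨ht.1, Order.one_le_iff_ne_zero.2 ht.2.2⟩
  have hm : MeasurableSet (eqSet f F) := by
    rw [eqSet_eq_biUnion hs h0]
    exact s.measurableSet_biUnion fun β _ => (hmf β).inter (hmF β)
  have hsum : volume (eqSet f F) = ∑ β ∈ s, volume (superlevel f β \ superlevel F (β + 1)) := by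
    simp_rw [← lev_inter_lev_eq hle]
    rw [eqSet_eq_biUnion hs h0]
    exact measure_biUnion_finset
      (fun β _ β' _ hne => disjoint_left.2 fun _ h h' => hne (h.2.2.symm.trans h'.2.2))
      (fun β _ => (hmf β).inter (hmF β))
  rw [strictSet_eq_diff hle, measure_sdiff hsub hm.nullMeasurableSet
    (ne_top_of_le_ne_top hfin (measure_mono hsub)), hsum]

theorem strictSet_subInd {ε : ℝ} {γ : Ordinal} (hf : NonIncr f) (hγ : γ ≤ f ε) :
    strictSet (subInd f γ (Ioc 0 ε)) (subInd F γ (Ioc 0 ε)) = strictSet f F := by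
  ext t
  simp only [strictSet, subInd, mem_ofPred_eq, and_congr_right_iff]
  intro ht
  split_ifs with htε
  · exact Ordinal.sub_lt_sub_iff_right (hγ.trans (hf t ε ht htε.2))
  · rfl

theorem subInd_mono {γ : Ordinal} {I : Set ℝ} (hle : ∀ t, 0 < t → f t ≤ F t) {t : ℝ}
    (ht : 0 < t) : subInd f γ I t ≤ subInd F γ I t := by
  unfold subInd
  split_ifs
  · exact Ordinal.sub_le_sub_right (hle t ht) γ
  · exact hle t ht

end StrictSet

theorem IsRearrangement.volume_strictSet_le {ε : ℝ} {γ : Ordinal} {f F G H : ℝ → Ordinal}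
    (hε : 0 ≤ ε) (hf : Admissible f) (hF : Admissible F) (hle : ∀ t, 0 < t → f t ≤ F t)
    (hγf : γ ≤ f ε) (hγF : γ ≤ F ε) (hG : IsRearrangement G (subInd f γ (Ioc 0 ε)))
    (hH : IsRearrangement H (subInd F γ (Ioc 0 ε))) :
    volume (strictSet f F) ≤ volume (strictSet G H) := by
  set u := subInd f γ (Ioc 0 ε)
  set v := subInd F γ (Ioc 0 ε)
  have hG' := hG.admissible_compress hε hf hγf
  have hH' := hH.admissible_compress hε hF hγF
  have hv := hF.finiteRange.subInd γ (Ioc 0 ε)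
  have hmu := measurableSet_lev_subInd (ε := ε) hf.nonIncr hγf
  have hmv := measurableSet_lev_subInd (ε := ε) hF.nonIncr hγF
  have hGu (β : Ordinal) (hβ : 0 < β) := hG.volume_superlevel (hf.finiteRange.subInd γ _) hmu hβ
  have hHv (β : Ordinal) (hβ : 0 < β) := hH.volume_superlevel hv hmv hβ
  set s := hv.toFinset.erase 0
  have hsv : ∀ t, 0 < t → v t ≠ 0 → v t ∈ s := fun t ht h0 =>
    Finset.mem_erase.2 ⟨h0, hv.mem_toFinset.2 ⟨t, ht, rfl⟩⟩
  have hsH : ∀ t, 0 < t → H t ≠ 0 → H t ∈ s := fun t ht h0 =>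
    Finset.mem_erase.2 ⟨h0, hv.mem_toFinset.2 (hH.mem_image ht h0)⟩
  have h0 : 0 ∉ s := Finset.notMem_erase 0 _
  have hfin := hH'.volume_superlevel_ne_top 1 one_pos
  calc volume (strictSet f F) = volume (strictSet u v) := by rw [strictSet_subInd hf.nonIncr hγf]
    _ = volume (superlevel v 1) - ∑ β ∈ s, volume (superlevel u β \ superlevel v (β + 1)) :=
      volume_strictSet (fun t ht => subInd_mono hle ht) hsv h0 hmu hmv (hHv 1 one_pos ▸ hfin)
    _ ≤ volume (superlevel H 1) - ∑ β ∈ s, volume (superlevel G β \ superlevel H (β + 1)) := by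
      rw [hHv 1 one_pos]
      refine tsub_le_tsub_left (Finset.sum_le_sum fun β hβ => ?_) _
      have hβ0 : 0 < β := pos_iff_ne_zero.2 (Finset.ne_of_mem_erase hβ)
      have hβ1 : (0 : Ordinal) < β + 1 := hβ0.trans_le le_self_add
      rw [hG'.volume_superlevel_diff hH' hβ0 hβ1, hGu β hβ0, hHv (β + 1) hβ1]
      exact le_measure_sdiff
    _ = volume (strictSet G H) :=
      (volume_strictSet (fun t ht => hG.compress_mono hε hf hF hle hγf hγF hH ht) hsH h0
        hG.1.measurableSet_lev hH.1.measurableSet_lev hfin).symm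

universe u

namespace GreedyProcedure

variable {ε : ℝ} {g : ℕ → ℝ → Ordinal.{u}} {γ : ℕ → Ordinal.{u}} {n : ℕ}

theorem tail (hg : GreedyProcedure ε g γ (n + 1)) :
    GreedyProcedure ε (fun i => g (i + 1)) (fun i => γ (i + 1)) n :=
  ⟨fun i hi => hg.1 (i + 1) (by omega), hg.2.1, fun i hi => hg.2.2.1 (i + 1) (by omega),
    fun i hi => hg.2.2.2 (i + 1) (by omega)⟩

theorem exists_eq_opow (hg : GreedyProcedure ε g γ n) {i : ℕ} (hi : i < n) :
    ∃ β : Ordinal.{u}, γ i = ω ^ β :=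
  (hg.2.2.1 i hi).1

theorem le_apply (hg : GreedyProcedure ε g γ n) {i : ℕ} (hi : i < n) : γ i ≤ g i ε :=
  (hg.2.2.1 i hi).2.1

theorem opow_le (hg : GreedyProcedure ε g γ n) {i : ℕ} (hi : i < n) {β : Ordinal}
    (hβ : ω ^ β ≤ g i ε) : ω ^ β ≤ γ i :=
  (hg.2.2.1 i hi).2.2 β hβ

theorem isRearrangement (hg : GreedyProcedure ε g γ n) {i : ℕ} (hi : i < n) :
    IsRearrangement (g (i + 1)) (subInd (g i) (γ i) (Ioc 0 ε)) :=
  hg.2.2.2 i hi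

theorem admissible_one (hε : 0 ≤ ε) (hg : GreedyProcedure ε g γ (n + 1))
    (h0 : Admissible (g 0)) : Admissible (g 1) :=
  (hg.isRearrangement n.succ_pos).admissible_compress hε h0 (hg.le_apply n.succ_pos)

theorem apply_le_apply_zero (hε : 0 ≤ ε) (hg : GreedyProcedure ε g γ n) (h0 : Admissible (g 0))
    {t : ℝ} (ht : 0 < t) : g n t ≤ g 0 t := by
  induction n generalizing g γ with
  | zero => exact le_rfl
  | succ n ih =>
    exact (ih hg.tail (hg.admissible_one hε h0)).trans
      ((hg.isRearrangement n.succ_pos).compress_le hε h0 (hg.le_apply n.succ_pos) ht)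

theorem apply_zero_le_osum_add (hε : 0 ≤ ε) (hg : GreedyProcedure ε g γ n)
    (h0 : Admissible (g 0)) {t : ℝ} (ht : 0 < t) (htε : t ≤ ε) : g 0 t ≤ osum γ n + g n t := by
  induction n generalizing g γ with
  | zero => simp [osum]
  | succ n ih =>
    calc g 0 t ≤ γ 0 + g 1 t :=
          (hg.isRearrangement n.succ_pos).le_add_compress hε h0 (hg.le_apply n.succ_pos) ht htε
      _ ≤ γ 0 + (osum (fun i => γ (i + 1)) n + g (n + 1) t) :=
          add_le_add_right (ih hg.tail (hg.admissible_one hε h0)) _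
      _ = osum γ (n + 1) + g (n + 1) t := by rw [osum_succ', add_assoc]

theorem osum_lt (hε : 0 < ε) (hg : GreedyProcedure ε g γ n) (h0 : Admissible (g 0))
    {c : Ordinal} (hc : IsPrincipal (· + ·) c) (hc0 : 0 < c) (hgc : g 0 ε < c) : osum γ n < c := by
  induction n generalizing g γ with
  | zero => exact hc0
  | succ n ih =>
    rw [osum_succ']
    exact hc ((hg.le_apply n.succ_pos).trans_lt hgc) (ih hg.tail (hg.admissible_one hε.le h0)
      (((hg.isRearrangement n.succ_pos).compress_le hε.le h0 (hg.le_apply n.succ_pos) hε).trans_lt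
        hgc))

variable {h : ℕ → ℝ → Ordinal.{u}} {η : ℕ → Ordinal.{u}} {m : ℕ}

theorem comparison_of_lt_head (hε : 0 < ε) (hg0 : Admissible (g 0)) (hh0 : Admissible (h 0))
    (hle : ∀ t, 0 < t → g 0 t ≤ h 0 t) (hg : GreedyProcedure ε g γ n)
    (hh : GreedyProcedure ε h η (m + 1)) (hlt : g 0 ε < η 0) :
    (∀ t, 0 < t → t ≤ ε → osum γ n + g n t ≤ osum η (m + 1) + h (m + 1) t) ∧
      osum γ n < osum η (m + 1) := by
  obtain ⟨e, he⟩ := hh.exists_eq_opow m.succ_pos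
  have hsum : osum γ n < ω ^ e :=
    hg.osum_lt hε hg0 (isPrincipal_add_omega0_opow e) (opow_pos e omega0_pos) (he ▸ hlt)
  refine ⟨fun t ht htε => ?_, hsum.trans_le (he ▸ osum_succ' η m ▸ le_self_add)⟩
  calc osum γ n + g n t ≤ osum γ n + g 0 t :=
        add_le_add_right (hg.apply_le_apply_zero hε.le hg0 ht) _
    _ ≤ h 0 t := add_le_of_lt_omega0_opow hsum
        (he ▸ (hh.le_apply m.succ_pos).trans (hh0.nonIncr t ε ht htε)) (hle t ht)
    _ ≤ osum η (m + 1) + h (m + 1) t := hh.apply_zero_le_osum_add hε.le hh0 ht htε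

theorem comparison (hε : 0 < ε) (hg0 : Admissible (g 0)) (hh0 : Admissible (h 0))
    (hle : ∀ t, 0 < t → g 0 t ≤ h 0 t) (hg : GreedyProcedure ε g γ n)
    (hh : GreedyProcedure ε h η m) :
    (∀ t, 0 < t → t ≤ ε → osum γ n + g n t ≤ osum η m + h m t) ∧
      (ENNReal.ofReal ε ≤ volume (strictSet (g 0) (h 0)) → osum γ n < osum η m) := by
  induction m generalizing g h γ η n with
  | zero =>
    have hg0ε : g 0 ε = 0 := nonpos_iff_eq_zero.1 (hh.2.1 ▸ hle ε hε)
    obtain rfl : n = 0 := by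
      by_contra hn
      exact hg.1 0 (Nat.pos_of_ne_zero hn) hg0ε
    refine ⟨fun t ht _ => by simpa [osum] using hle t ht, fun hvol => ?_⟩
    have hsub : strictSet (g 0) (h 0) ⊆ superlevel (h 0) 1 := fun t ht =>
      ⟨ht.1, Order.one_le_iff_ne_zero.2 (zero_le.trans_lt ht.2).ne'⟩
    have h1 := (hh0.le_iff one_pos hε).2 (hvol.trans (measure_mono hsub))
    exact absurd (hh.2.1 ▸ h1) (by simp)
  | succ m ih =>
    by_cases hlt : g 0 ε < η 0
    · obtain ⟨hle', hlt'⟩ := comparison_of_lt_head hε hg0 hh0 hle hg hh hlt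
      exact ⟨hle', fun _ => hlt'⟩
    obtain ⟨n, rfl⟩ : ∃ k, n = k + 1 := by
      refine Nat.exists_eq_succ_of_ne_zero fun hn => ?_
      subst hn
      obtain ⟨e, he⟩ := hh.exists_eq_opow m.succ_pos
      exact (opow_pos e omega0_pos).not_ge (he ▸ hg.2.1 ▸ not_lt.1 hlt)
    have hγη : γ 0 = η 0 := by
      obtain ⟨e, he⟩ := hg.exists_eq_opow n.succ_pos
      obtain ⟨e', he'⟩ := hh.exists_eq_opow m.succ_pos
      refine le_antisymm ?_ ?_
      · exact he ▸ hh.opow_le m.succ_pos (he ▸ (hg.le_apply n.succ_pos).trans (hle ε hε))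
      · exact he' ▸ hg.opow_le n.succ_pos (he' ▸ not_lt.1 hlt)
    have hγ : γ 0 ≤ g 0 ε := hg.le_apply n.succ_pos
    have hγh : γ 0 ≤ h 0 ε := hγη ▸ hh.le_apply m.succ_pos
    have hR : IsRearrangement (h 1) (subInd (h 0) (γ 0) (Ioc 0 ε)) :=
      hγη ▸ hh.isRearrangement m.succ_pos
    obtain ⟨ih_le, ih_lt⟩ := ih (hg.admissible_one hε.le hg0) (hh.admissible_one hε.le hh0)
      (fun t ht => (hg.isRearrangement n.succ_pos).compress_mono hε.le hg0 hh0 hle hγ hγh hR ht)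
      hg.tail hh.tail
    refine ⟨fun t ht htε => ?_, fun hvol => ?_⟩
    · rw [osum_succ', osum_succ', hγη, add_assoc, add_assoc]
      exact add_le_add_right (ih_le t ht htε) _
    · rw [osum_succ', osum_succ', hγη]
      refine add_lt_add_right (ih_lt (hvol.trans ?_)) _
      exact (hg.isRearrangement n.succ_pos).volume_strictSet_le hε.le hg0 hh0 hle hγ hγh hR

end GreedyProcedure

theorem stmt_3_general (ε A : ℝ) (hε : 0 < ε)
    (g h : ℕ → ℝ → Ordinal) (γ η : ℕ → Ordinal) (n m : ℕ)
    (hg₀NI : NonIncr (g 0)) (hg₀LC : LeftCont (g 0)) (hg₀FR : FiniteRange (g 0))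
    (hh₀NI : NonIncr (h 0)) (hh₀LC : LeftCont (h 0)) (hh₀FR : FiniteRange (h 0))
    (hvan : ∀ t : ℝ, A < t → g 0 t = 0 ∧ h 0 t = 0)
    (hle : ∀ t : ℝ, 0 < t → g 0 t ≤ h 0 t)
    (hgreedyg : GreedyProcedure ε g γ n)
    (hgreedyh : GreedyProcedure ε h η m) :
    (∀ t : ℝ, 0 < t → t ≤ ε → osum γ n + g n t ≤ osum η m + h m t) ∧
      (ENNReal.ofReal ε ≤ volume {t : ℝ | 0 < t ∧ g 0 t + 1 ≤ h 0 t} →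
        osum γ n + g n ε + 1 ≤ osum η m + h m ε) := by
  have hg0 : Admissible (g 0) := ⟨hg₀NI, hg₀LC, hg₀FR,
    fun _ => VanishesBeyond.volume_superlevel_ne_top fun t ht => (hvan t ht).1⟩
  have hh0 : Admissible (h 0) := ⟨hh₀NI, hh₀LC, hh₀FR,
    fun _ => VanishesBeyond.volume_superlevel_ne_top fun t ht => (hvan t ht).2⟩
  obtain ⟨hcomp, hstrict⟩ := hgreedyg.comparison hε hg0 hh0 hle hgreedyh
  refine ⟨hcomp, fun hvol => ?_⟩
  rw [hgreedyg.2.1, hgreedyh.2.1, add_zero, add_zero, Order.add_one_le_iff]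
  exact hstrict (by simpa only [strictSet, Order.add_one_le_iff] using hvol)

/-- Proposition 3.5, comparison part. -/
theorem stmt_3 (ε A : ℝ) (hε : 0 < ε)
    (g h : ℕ → ℝ → Ordinal) (γ η : ℕ → Ordinal) (n m : ℕ)
    (hg₀NI : NonIncr (g 0)) (hg₀LC : LeftCont (g 0)) (hg₀FR : FiniteRange (g 0))
    (hg₀CV : CountableValued (g 0))
    (hh₀NI : NonIncr (h 0)) (hh₀LC : LeftCont (h 0)) (hh₀FR : FiniteRange (h 0))
    (hh₀CV : CountableValued (h 0))
    (hvan : ∀ t : ℝ, A < t → g 0 t = 0 ∧ h 0 t = 0)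
    (hle : ∀ t : ℝ, 0 < t → g 0 t ≤ h 0 t)
    (hgreedyg : GreedyProcedure ε g γ n)
    (hgreedyh : GreedyProcedure ε h η m) :
    (∀ t : ℝ, 0 < t → t ≤ ε → osum γ n + g n t ≤ osum η m + h m t) ∧
      (ENNReal.ofReal ε ≤ volume {t : ℝ | 0 < t ∧ g 0 t + 1 ≤ h 0 t} →
        osum γ n + g n ε + 1 ≤ osum η m + h m ε) :=
  stmt_3_general ε A hε g h γ η n m hg₀NI hg₀LC hg₀FR hh₀NI hh₀LC hh₀FR hvan hle hgreedyg hgreedyh
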